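/- Let p ∈ Δ(Y) for a finite set Y with unique mode y_1, and let ŷ_n be the empirical mode of n i.i.d. samples from p (ties broken arbitrarily). Then P(ŷ_n ≠ y_1) ≤ (m-1) exp(-n Δ_2²), where m = |Y| and Δ_2² = -ln(1 - (√p(y_1) - √p(y_2))²) with y_2 a second-most-likely class. -/

import Mathlib

/-!
For a competitor `y ≠ y₁`, reweight `p` by giving both `y₁` and `y` the mass `√(p y₁ * p y)`.
On every sample in which `y` occurs at least as often as `y₁` the product weight can only
grow, while the reweighted total mass is `1 - (√(p y₁) - √(p y))²`; summing the product weight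
over all samples therefore bounds `P(count y₁ ≤ count y)` by the `n`-th power of that mass
(a Chernoff bound). This power is largest for `y = y₂`, and a union bound over the `m - 1`
competitors concludes.
-/

open Finset Real

theorem prod_comp_eq_prod_pow_card {ι Y M : Type*} [Fintype ι] [Fintype Y] [DecidableEq Y]
    [CommMonoid M] (f : Y → M) (ω : ι → Y) :
    ∏ j, f (ω j) = ∏ y, f y ^ #{j | ω j = y} := by
  simp_rw [← prod_const, prod_fiberwise']

theorem pow_mul_pow_le_sqrt_mul_pow {x y : ℝ} (hy : 0 ≤ y) (hyx : y ≤ x) {k l : ℕ}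
    (hkl : k ≤ l) : x ^ k * y ^ l ≤ √(x * y) ^ k * √(x * y) ^ l := by
  obtain ⟨d, rfl⟩ := Nat.exists_eq_add_of_le hkl
  have hxy : 0 ≤ x * y := mul_nonneg (hy.trans hyx) hy
  have hy_le : y ≤ √(x * y) := by
    simpa [sqrt_mul_self hy] using sqrt_le_sqrt (mul_le_mul_of_nonneg_right hyx hy)
  calc x ^ k * y ^ (k + d) = (x * y) ^ k * y ^ d := by ring
    _ ≤ (x * y) ^ k * √(x * y) ^ d :=
      mul_le_mul_of_nonneg_left (pow_le_pow_left₀ hy hy_le d) (pow_nonneg hxy k)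
    _ = √(x * y) ^ k * √(x * y) ^ (k + d) := by
      nth_rw 1 [← sq_sqrt hxy]
      ring

theorem sq_sqrt_sub_sqrt_le {a b c : ℝ} (hcb : c ≤ b) (hba : b ≤ a) :
    (√a - √b) ^ 2 ≤ (√a - √c) ^ 2 :=
  pow_le_pow_left₀ (sub_nonneg.2 (sqrt_le_sqrt hba)) (sub_le_sub_left (sqrt_le_sqrt hcb) _) 2

theorem pow_le_exp_mul_log (x : ℝ) (n : ℕ) : x ^ n ≤ exp (n * log x) := by
  rcases eq_or_ne x 0 with rfl | hx
  · rcases n with _ | n <;> simp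
  calc x ^ n ≤ |x| ^ n := (le_abs_self _).trans_eq (abs_pow x n)
    _ = exp (n * log x) := by
      rw [← log_abs, ← log_pow, exp_log (pow_pos (abs_pos.2 hx) n)]

theorem sum_filter_ne_le_card_sub_one_mul {α Y : Type*} [Fintype Y] [DecidableEq Y]
    {s : Finset α} {f : α → ℝ} (g : α → Y) (y₀ : Y) {B : ℝ}
    (hB : ∀ y, y ≠ y₀ → ∑ x ∈ s with g x = y, f x ≤ B) :
    ∑ x ∈ s with g x ≠ y₀, f x ≤ (Fintype.card Y - 1) * B := by
  have hfiber : ∀ y ∈ univ.erase y₀,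
      ∑ x ∈ {x ∈ s | g x ≠ y₀} with g x = y, f x = ∑ x ∈ s with g x = y, f x := by
    intro y hy
    rw [filter_filter]
    exact sum_congr (filter_congr fun x _ => and_iff_right_of_imp fun h => h ▸ (mem_erase.1 hy).1)
      fun _ _ => rfl
  calc ∑ x ∈ s with g x ≠ y₀, f x
      = ∑ y ∈ univ.erase y₀, ∑ x ∈ s with g x = y, f x := by
        rw [← sum_congr rfl hfiber]
        exact (sum_fiberwise_of_maps_to fun x hx =>
          mem_erase.2 ⟨(mem_filter.1 hx).2, mem_univ _⟩) _ |>.symm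
    _ ≤ ∑ y ∈ univ.erase y₀, B := sum_le_sum fun y hy => hB y (mem_erase.1 hy).1
    _ = (Fintype.card Y - 1) * B := by
        rw [sum_const, card_erase_of_mem (mem_univ _), card_univ, nsmul_eq_mul,
          Nat.cast_pred (Fintype.card_pos_iff.2 ⟨y₀⟩)]

section PairGeomMean

variable {Y : Type*} [DecidableEq Y] {p : Y → ℝ} {a b : Y}

noncomputable def pairGeomMean (p : Y → ℝ) (a b y : Y) : ℝ :=
  if y ∈ ({a, b} : Finset Y) then √(p a * p b) else p y

theorem pairGeomMean_of_mem_pair {y : Y} (hy : y ∈ ({a, b} : Finset Y)) :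
    pairGeomMean p a b y = √(p a * p b) :=
  if_pos hy

theorem pairGeomMean_of_notMem_pair {y : Y} (hy : y ∉ ({a, b} : Finset Y)) :
    pairGeomMean p a b y = p y :=
  if_neg hy

theorem pairGeomMean_nonneg (hp0 : ∀ y, 0 ≤ p y) (y : Y) : 0 ≤ pairGeomMean p a b y := by
  unfold pairGeomMean
  split_ifs
  exacts [sqrt_nonneg _, hp0 y]

theorem sum_pairGeomMean [Fintype Y] (hab : a ≠ b) (ha : 0 ≤ p a) (hb : 0 ≤ p b) :
    ∑ y, pairGeomMean p a b y = ∑ y, p y - (√(p a) - √(p b)) ^ 2 := by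
  have hcompl : ∑ y ∈ {a, b}ᶜ, pairGeomMean p a b y = ∑ y ∈ {a, b}ᶜ, p y :=
    sum_congr rfl fun y hy => pairGeomMean_of_notMem_pair (mem_compl.1 hy)
  rw [← sum_add_sum_compl {a, b}, ← sum_add_sum_compl {a, b} p, sum_pair hab, sum_pair hab,
    hcompl, pairGeomMean_of_mem_pair (by simp), pairGeomMean_of_mem_pair (by simp), sqrt_mul ha]
  linarith [sq_sqrt ha, sq_sqrt hb]

theorem prod_le_prod_pairGeomMean {ι : Type*} [Fintype Y] [Fintype ι] (hp0 : ∀ y, 0 ≤ p y)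
    (hab : a ≠ b) (hba : p b ≤ p a) (ω : ι → Y) (hcount : #{j | ω j = a} ≤ #{j | ω j = b}) :
    ∏ j, p (ω j) ≤ ∏ j, pairGeomMean p a b (ω j) := by
  have hcompl : ∏ y ∈ {a, b}ᶜ, pairGeomMean p a b y ^ #{j | ω j = y}
      = ∏ y ∈ {a, b}ᶜ, p y ^ #{j | ω j = y} :=
    prod_congr rfl fun y hy => by rw [pairGeomMean_of_notMem_pair (mem_compl.1 hy)]
  rw [prod_comp_eq_prod_pow_card p, prod_comp_eq_prod_pow_card (pairGeomMean p a b),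
    ← prod_mul_prod_compl {a, b}, ← prod_mul_prod_compl {a, b} (fun y => _ ^ #{j | ω j = y}),
    prod_pair hab, prod_pair hab, pairGeomMean_of_mem_pair (by simp),
    pairGeomMean_of_mem_pair (by simp), hcompl]
  exact mul_le_mul_of_nonneg_right (pow_mul_pow_le_sqrt_mul_pow (hp0 b) hba hcount)
    (prod_nonneg fun y _ => pow_nonneg (hp0 y) _)

theorem sum_prod_le_of_count_le [Fintype Y] {n : ℕ} (hp0 : ∀ y, 0 ≤ p y) (hp1 : ∑ y, p y = 1)
    (hab : a ≠ b) (hba : p b ≤ p a) (S : Finset (Fin n → Y))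
    (hS : ∀ ω ∈ S, #{j | ω j = a} ≤ #{j | ω j = b}) :
    ∑ ω ∈ S, ∏ j, p (ω j) ≤ (1 - (√(p a) - √(p b)) ^ 2) ^ n :=
  calc ∑ ω ∈ S, ∏ j, p (ω j)
      ≤ ∑ ω ∈ S, ∏ j, pairGeomMean p a b (ω j) :=
        sum_le_sum fun ω hω => prod_le_prod_pairGeomMean hp0 hab hba ω (hS ω hω)
    _ ≤ ∑ ω : Fin n → Y, ∏ j, pairGeomMean p a b (ω j) :=
        sum_le_univ_sum_of_nonneg fun ω => prod_nonneg fun j _ => pairGeomMean_nonneg hp0 _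
    _ = (1 - (√(p a) - √(p b)) ^ 2) ^ n := by
        rw [← Fintype.sum_pow, sum_pairGeomMean hab (hp0 a) (hp0 b), hp1]

end PairGeomMean

theorem empirical_mode_error {Y : Type*} [Fintype Y] [DecidableEq Y]
    (p : Y → ℝ) (hp0 : ∀ y, 0 ≤ p y) (hp1 : ∑ y, p y = 1)
    (y1 y2 : Y) (h12 : y1 ≠ y2)
    (hmode : ∀ y, y ≠ y1 → p y < p y1)
    (hsec : ∀ y, y ≠ y1 → p y ≤ p y2)
    (n : ℕ)
    (hatY : (Fin n → Y) → Y)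
    (hargmax : ∀ ω y, (Finset.univ.filter fun j => ω j = y).card
        ≤ (Finset.univ.filter fun j => ω j = hatY ω).card) :
    ∑ ω ∈ Finset.univ.filter (fun ω : Fin n → Y => hatY ω ≠ y1), ∏ j, p (ω j)
    ≤ ((Fintype.card Y : ℝ) - 1) *
        Real.exp (-(n : ℝ) * (-Real.log (1 - (Real.sqrt (p y1) - Real.sqrt (p y2)) ^ 2))) := by
  have hcard : 1 ≤ Fintype.card Y := Fintype.card_pos_iff.2 ⟨y1⟩
  set x := 1 - (√(p y1) - √(p y2)) ^ 2
  refine (sum_filter_ne_le_card_sub_one_mul hatY y1 fun y hy => ?_).trans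
    (mul_le_mul_of_nonneg_left ((pow_le_exp_mul_log x n).trans_eq (by rw [neg_mul_neg]))
      (sub_nonneg.2 (Nat.one_le_cast.2 hcard)))
  have hpy := (hmode y hy).le
  have hsample_le : ∀ ω ∈ ({ω | hatY ω = y} : Finset (Fin n → Y)),
      #{j | ω j = y1} ≤ #{j | ω j = y} :=
    fun ω hω => (mem_filter.1 hω).2 ▸ hargmax ω y1
  have hmass_nonneg : 0 ≤ 1 - (√(p y1) - √(p y)) ^ 2 := by
    have hp1_le_one : p y1 ≤ 1 := hp1 ▸ single_le_sum (fun y _ => hp0 y) (mem_univ y1)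
    have h := sq_sqrt_sub_sqrt_le (hp0 y) hpy
    rw [sqrt_zero, sub_zero, sq_sqrt (hp0 y1)] at h
    linarith
  have hmass_le : 1 - (√(p y1) - √(p y)) ^ 2 ≤ x := by
    linarith [sq_sqrt_sub_sqrt_le (hsec y hy) (hmode y2 h12.symm).le]
  exact (sum_prod_le_of_count_le hp0 hp1 hy.symm hpy _ hsample_le).trans
    (pow_le_pow_left₀ hmass_nonneg hmass_le n)
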